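/- arXiv:2104.10199 — 2 statements merged into one kernel-verified Lean document; each statement's English description precedes it below -/
import Mathlib

section
/- Let (X,*) be a finite quandle and a ∈ X. Suppose that the cycles of the right translation R_a have pairwise distinct lengths (i.e., no two cycles in the disjoint cycle decomposition of R_a, counting fixed points as 1-cycles, have the same length), and that for every i ∈ X the only fixed point of R_i is i. Then the left translation L_a : X → X, j ↦ a*j, is a bijection of X, and the elements of every cycle of L_a are contained in some cycle of R_a; that is, for all x, y ∈ X, if y lies in the L_a-cycle of x (some iterate of L_a maps x to y), then y lies in the R_a-cycle of x. -/
/-!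
Write `S = R_a`. Every power of `S` is a quandle automorphism fixing `a`, so `S` commutes with
`L_a` and the `S`-period of `a * x` divides that of `x`; the whole theorem follows once the two
periods are equal, since then `a * x` lies in the `S`-cycle of `x`.

For the reverse divisibility put `c = a * x` and `e` the period of `c`. By induction on `e` we
may assume `a * c` has the same period as `c`, hence `a * c = S^k c`. Computing `R_{a * c}` in
two ways gives `R_c S R_c⁻¹ = S^k R_c S^{-k}`, while `S^e c = c` makes `R_c` commute with `S^e`;
raising to the `e`-th power yields `R_c^e = S^e`. As `R_c = R_x S R_x⁻¹`, the permutation `R_x`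
commutes with `S^e`, so `S^e x` is a fixed point of `R_x` and therefore equals `x`.
-/

open Function Quandles Rack

theorem pow_eq_pow_of_conj_eq_conj {G : Type*} [Group G] {c s : G} {e k : ℕ}
    (hc : Commute c (s ^ e)) (h : s ^ k * c * (s ^ k)⁻¹ = c * s * c⁻¹) : c ^ e = s ^ e := by
  have hconj : s ^ k * c ^ e * (s ^ k)⁻¹ = s ^ e := by
    rw [← conj_pow, h, conj_pow, hc.eq, mul_inv_cancel_right]
  calc c ^ e = (s ^ k)⁻¹ * (s ^ k * c ^ e * (s ^ k)⁻¹) * s ^ k := by group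
    _ = s ^ e := by rw [hconj, mul_assoc, (Commute.pow_pow_self s e k).eq, inv_mul_cancel_left]

def Function.HasDistinctCycleLengths {α : Type*} (f : α → α) : Prop :=
  ∀ x y, minimalPeriod f x = minimalPeriod f y → ∃ n, f^[n] x = y

theorem Rack.ad_conj_iterate {R : Type*} [Rack R] (a z : R) (n : ℕ) :
    act' ((a ◃ ·)^[n] z) = act' a ^ n * act' z * (act' a ^ n)⁻¹ := by
  induction n with
  | zero => simp
  | succ n ih => rw [iterate_succ_apply', ad_conj, ih]; group

namespace Quandle

variable {Q : Type*} [Quandle Q]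

theorem commute_act_act_right (a : Q) : Function.Commute (a ◃ ·) (· ◃ a) := fun x =>
  show a ◃ x ◃ a = (a ◃ x) ◃ a by rw [self_distrib, fix]

theorem minimalPeriod_act_right_dvd (a x : Q) :
    minimalPeriod (a ◃ ·) (x ◃ a) ∣ minimalPeriod (a ◃ ·) x :=
  ((isPeriodicPt_minimalPeriod _ x).map (commute_act_act_right a).symm).minimalPeriod_dvd

theorem isPeriodicPt_of_act_right_mem_orbit (hfix : ∀ i x : Q, i ◃ x = x → x = i) {a x : Q}
    {k : ℕ} (hk : (a ◃ ·)^[k] (x ◃ a) = (x ◃ a) ◃ a) :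
    IsPeriodicPt (a ◃ ·) (minimalPeriod (a ◃ ·) (x ◃ a)) x := by
  set c := x ◃ a
  set e := minimalPeriod (a ◃ ·) c
  have hce : act' a ^ e * act' c * (act' a ^ e)⁻¹ = act' c := by
    rw [← ad_conj_iterate, isPeriodicPt_minimalPeriod]
  have hcomm : Commute (act' c) (act' a ^ e) := eq_mul_inv_iff_mul_eq.mp hce.symm
  have hconj : act' a ^ k * act' c * (act' a ^ k)⁻¹ = act' c * act' a * (act' c)⁻¹ := by
    rw [← ad_conj_iterate, hk, ad_conj]
  have hx : act' x * act' a ^ e * (act' x)⁻¹ = act' a ^ e := by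
    rw [← conj_pow, ← ad_conj, pow_eq_pow_of_conj_eq_conj hcomm hconj]
  have hxe : x ◃ (a ◃ ·)^[e] x = (a ◃ ·)^[e] (x ◃ x) :=
    congrArg (· x) (eq_mul_inv_iff_mul_eq.mp hx.symm).symm
  rw [fix] at hxe
  exact hfix x _ hxe

theorem minimalPeriod_act_right [Finite Q] {a : Q} (hdist : HasDistinctCycleLengths (a ◃ ·))
    (hfix : ∀ i x : Q, i ◃ x = x → x = i) (x : Q) :
    minimalPeriod (a ◃ ·) (x ◃ a) = minimalPeriod (a ◃ ·) x := by
  set c := x ◃ a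
  have hpos : 0 < minimalPeriod (a ◃ ·) c :=
    minimalPeriod_pos_of_mem_periodicPts ((act' a).injective.mem_periodicPts c)
  have hc : minimalPeriod (a ◃ ·) (c ◃ a) = minimalPeriod (a ◃ ·) c := by
    rcases (Nat.le_of_dvd hpos (minimalPeriod_act_right_dvd a c)).lt_or_eq with hlt | heq
    · exact minimalPeriod_act_right hdist hfix c
    · exact heq
  obtain ⟨k, hk⟩ := hdist c (c ◃ a) hc.symm
  exact Nat.dvd_antisymm (minimalPeriod_act_right_dvd a x)
    (isPeriodicPt_of_act_right_mem_orbit hfix hk).minimalPeriod_dvd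
termination_by minimalPeriod (a ◃ ·) (x ◃ a)

theorem act_right_injective [Finite Q] {a : Q} (hdist : HasDistinctCycleLengths (a ◃ ·))
    (hfix : ∀ i x : Q, i ◃ x = x → x = i) : Injective (· ◃ a) := by
  intro x y (hxy : x ◃ a = y ◃ a)
  obtain ⟨n, rfl⟩ := hdist x y (by
    rw [← minimalPeriod_act_right hdist hfix x, ← minimalPeriod_act_right hdist hfix y, hxy])
  have hn : IsPeriodicPt (a ◃ ·) n (x ◃ a) :=
    ((commute_act_act_right a).iterate_left n x).trans hxy.symm
  have hdvd := hn.minimalPeriod_dvd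
  rw [minimalPeriod_act_right hdist hfix] at hdvd
  exact (isPeriodicPt_iff_minimalPeriod_dvd.mpr hdvd).symm

theorem exists_iterate_act_eq_iterate_act_right [Finite Q] {a : Q}
    (hdist : HasDistinctCycleLengths (a ◃ ·)) (hfix : ∀ i x : Q, i ◃ x = x → x = i)
    (x : Q) (n : ℕ) : ∃ m, (a ◃ ·)^[m] x = (· ◃ a)^[n] x := by
  induction n with
  | zero => exact ⟨0, rfl⟩
  | succ n ih =>
    obtain ⟨m, hm⟩ := ih
    obtain ⟨k, hk⟩ := hdist _ _ (minimalPeriod_act_right hdist hfix ((· ◃ a)^[n] x)).symm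
    exact ⟨k + m, by rw [iterate_add_apply, hm, hk, iterate_succ_apply']⟩

end Quandle

/-- Mathlib's quandles act on the left: `i ◃ x` is the paper's `x * i`. -/
noncomputable abbrev quandleOfRightAction {X : Type*} (op : X → X → X)
    (hidem : ∀ i : X, op i i = i)
    (hrinv : ∀ i : X, Function.Bijective (fun x => op x i))
    (hdistrib : ∀ i j k : X, op (op i j) k = op (op i k) (op j k)) : Quandle X where
  act i x := op x i
  self_distrib := hdistrib _ _ _
  invAct i := (Equiv.ofBijective _ (hrinv i)).symm
  left_inv i := (Equiv.ofBijective _ (hrinv i)).symm_apply_apply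
  right_inv i := (Equiv.ofBijective _ (hrinv i)).apply_symm_apply
  fix := hidem _

/-- Let `(X, *)` be a finite quandle and `a ∈ X`. If the cycles of the right translation
`R_a` have pairwise distinct lengths (any two elements with the same minimal period under
`R_a` lie in the same cycle of `R_a`), and every right translation `R_i` has `i` as its
only fixed point, then the left translation `L_a` is a bijection and every cycle of `L_a`
is contained in a cycle of `R_a`. -/
theorem left_translation_bijective_and_refines
    {X : Type*} [Finite X] (op : X → X → X) (a : X)
    (hidem : ∀ i : X, op i i = i)
    (hrinv : ∀ i : X, Function.Bijective (fun x => op x i))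
    (hdistrib : ∀ i j k : X, op (op i j) k = op (op i k) (op j k))
    (hdist : ∀ x y : X,
      Function.minimalPeriod (fun z => op z a) x = Function.minimalPeriod (fun z => op z a) y →
      ∃ n : ℕ, (fun z => op z a)^[n] x = y)
    (hfix : ∀ i x : X, op x i = x → x = i) :
    Function.Bijective (fun j => op a j) ∧
      ∀ x y : X, (∃ n : ℕ, (fun j => op a j)^[n] x = y) →
        ∃ m : ℕ, (fun z => op z a)^[m] x = y := by
  let := quandleOfRightAction op hidem hrinv hdistrib
  refine ⟨Finite.injective_iff_bijective.mp (Quandle.act_right_injective hdist hfix), ?_⟩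
  rintro x _ ⟨n, rfl⟩
  exact Quandle.exists_iterate_act_eq_iterate_act_right hdist hfix x n
end

section
/- Let (X,*) be a finite quandle such that for every i ∈ X the cycles of the right translation R_i have pairwise distinct lengths (i.e., no two cycles in the disjoint cycle decomposition of R_i, counting fixed points as 1-cycles, have the same length). Then (X,*) is a latin quandle: every left translation L_i : X → X, j ↦ i*j, is a bijection. -/
open Function

section QuandleLatin

variable {X : Type*} (op : X → X → X)

/-- Every point is periodic for an injective self-map of a finite type. -/
private theorem quandle_mem_pp [Finite X] {f : X → X} (hf : Function.Injective f) (x : X) :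
    x ∈ periodicPts f := by
  obtain ⟨i, j, hij, h⟩ := Finite.exists_ne_map_eq_of_infinite (fun n : ℕ => f^[n] x)
  rcases Nat.lt_or_lt_of_ne hij with h' | h'
  · refine mem_periodicPts.2 ⟨j - i, by omega, ?_⟩
    apply hf.iterate i
    rw [← Function.iterate_add_apply]
    have : i + (j - i) = j := by omega
    rw [this]; exact h.symm
  · refine mem_periodicPts.2 ⟨i - j, by omega, ?_⟩
    apply hf.iterate j
    rw [← Function.iterate_add_apply]
    have : j + (i - j) = i := by omega
    rw [this]; exact h

/-- Right translations are quandle endomorphisms; iterated version. -/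
private theorem quandle_aut_iter
    (hdistrib : ∀ i j k : X, op (op i j) k = op (op i k) (op j k)) (i : X) (k : ℕ) (x y : X) :
    (fun z => op z i)^[k] (op x y)
      = op ((fun z => op z i)^[k] x) ((fun z => op z i)^[k] y) := by
  induction k with
  | zero => simp
  | succ k ih =>
    rw [Function.iterate_succ_apply', Function.iterate_succ_apply',
      Function.iterate_succ_apply', ih]
    exact hdistrib _ _ i

/-- The key lemma: `i*a` has the same minimal period under `R_i` as `a`. -/
private theorem quandle_key_lemma [Finite X]
    (hidem : ∀ i : X, op i i = i)
    (hrinv : ∀ i : X, Function.Bijective (fun x => op x i))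
    (hdistrib : ∀ i j k : X, op (op i j) k = op (op i k) (op j k))
    (hdist : ∀ i x y : X,
      Function.minimalPeriod (fun z => op z i) x = Function.minimalPeriod (fun z => op z i) y →
      ∃ n : ℕ, (fun z => op z i)^[n] x = y) :
    ∀ i a : X, Function.minimalPeriod (fun z => op z i) (op i a)
        = Function.minimalPeriod (fun z => op z i) a := by
  suffices H : ∀ n : ℕ, ∀ i a : X, Function.minimalPeriod (fun z => op z i) a = n →
      Function.minimalPeriod (fun z => op z i) (op i a) = n by
    intro i a; exact H _ i a rfl
  intro n
  induction n using Nat.strong_induction_on with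
  | _ n IH =>
    intro i a hn
    set φ : X → X := fun z => op z i with hφ
    set c : X := op i a with hc
    set m : ℕ := Function.minimalPeriod φ c with hm
    -- positivity of periods
    have hnpos : 0 < n := by
      rw [← hn]
      exact minimalPeriod_pos_of_mem_periodicPts (quandle_mem_pp (hrinv i).injective a)
    have hmpos : 0 < m := by
      rw [hm]
      exact minimalPeriod_pos_of_mem_periodicPts (quandle_mem_pp (hrinv i).injective c)
    -- φ fixes i
    have hfixi : φ i = i := hidem i
    -- φ^[k] i = i
    have hfixi_iter : ∀ k, φ^[k] i = i := fun k => Function.iterate_fixed hfixi k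
    -- φ^[n] a = a
    have hpa : φ^[n] a = a := by rw [← hn]; exact Function.iterate_minimalPeriod
    -- φ^[m] c = c
    have hpc : φ^[m] c = c := by rw [hm]; exact Function.iterate_minimalPeriod
    -- m ∣ n
    have hdvd : m ∣ n := by
      have : IsPeriodicPt φ n c := by
        show φ^[n] c = c
        rw [hc, quandle_aut_iter op hdistrib i n i a, hfixi_iter n, hpa]
      exact (hm ▸ this.minimalPeriod_dvd)
    -- goal reduces to m = n
    show Function.minimalPeriod φ c = n
    rw [← hm]
    rcases eq_or_lt_of_le (Nat.le_of_dvd hnpos hdvd) with heq | hlt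
    · exact heq
    -- now m < n; derive a contradiction
    exfalso
    -- Step A : minimal period of i*c is m
    have hic : Function.minimalPeriod φ (op i c) = m := IH m hlt i c hm.symm
    -- Step B : ∃ t, φ^[t] c = i*c
    obtain ⟨t, ht⟩ := hdist i c (op i c) (by rw [hic, ← hm])
    -- the three basic intertwining relations
    set ψ : X → X := fun z => op z c with hψ
    set η : X → X := fun z => op z (op i c) with hη
    -- (1) η ∘ ψ = ψ ∘ φ
    have L1 : ∀ x, η (ψ x) = ψ (φ x) := by
      intro x
      show op (op x c) (op i c) = op (op x i) c
      exact (hdistrib x i c).symm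
    -- (3) φ^[m] ∘ ψ = ψ ∘ φ^[m]
    have L3 : ∀ x, φ^[m] (ψ x) = ψ (φ^[m] x) := by
      intro x
      show φ^[m] (op x c) = op (φ^[m] x) c
      rw [quandle_aut_iter op hdistrib i m x c, hpc]
    -- (2) η ∘ φ^[t] = φ^[t] ∘ ψ
    have L2 : ∀ x, η (φ^[t] x) = φ^[t] (ψ x) := by
      intro x
      show op (φ^[t] x) (op i c) = φ^[t] (op x c)
      rw [← ht, ← quandle_aut_iter op hdistrib i t x c]
    -- iterated versions
    have L1k : ∀ k x, η^[k] (ψ x) = ψ (φ^[k] x) := by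
      intro k
      induction k with
      | zero => simp
      | succ k ih =>
        intro x
        rw [Function.iterate_succ_apply, Function.iterate_succ_apply]
        rw [L1 x, ih (φ x)]
    have L2k : ∀ k x, η^[k] (φ^[t] x) = φ^[t] (ψ^[k] x) := by
      intro k
      induction k with
      | zero => simp
      | succ k ih =>
        intro x
        rw [Function.iterate_succ_apply, Function.iterate_succ_apply]
        rw [L2 x, ih (ψ x)]
    -- E1 : η^[m] = φ^[m]
    have E1 : ∀ y, η^[m] y = φ^[m] y := by
      intro y
      obtain ⟨x, rfl⟩ := (hrinv c).surjective y
      show η^[m] (ψ x) = φ^[m] (ψ x)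
      rw [L1k m x, L3 x]
    -- E2 : ψ^[m] = φ^[m]
    have E2 : ∀ x, ψ^[m] x = φ^[m] x := by
      intro x
      have h1 : φ^[t] (ψ^[m] x) = φ^[t] (φ^[m] x) := by
        rw [← L2k m x, E1 (φ^[t] x), ← Function.iterate_add_apply, Nat.add_comm,
          Function.iterate_add_apply]
      exact (hrinv i).injective.iterate t h1
    -- relation between ψ and R_a
    have L4 : ∀ z, ψ (op z a) = op (op z i) a := by
      intro z
      show op (op z a) c = op (op z i) a
      rw [hc]
      exact (hdistrib z i a).symm
    have L4k : ∀ k z, ψ^[k] (op z a) = op (φ^[k] z) a := by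
      intro k
      induction k with
      | zero => simp
      | succ k ih =>
        intro z
        rw [Function.iterate_succ_apply, L4 z, ih (op z i)]
        rfl
    -- evaluate at a : φ^[m] a is a fixed point of R_a
    have hfix : op (φ^[m] a) a = φ^[m] a := by
      have h1 : ψ^[m] (op a a) = op (φ^[m] a) a := L4k m a
      rw [hidem a] at h1
      rw [← h1, E2 a]
    -- uniqueness of fixed point of R_a (via hdist)
    have huniq : φ^[m] a = a := by
      have h1 : Function.minimalPeriod (fun z => op z a) (φ^[m] a) = 1 :=
        Function.minimalPeriod_eq_one_iff_isFixedPt.2 hfix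
      have h2 : Function.minimalPeriod (fun z => op z a) a = 1 :=
        Function.minimalPeriod_eq_one_iff_isFixedPt.2 (hidem a)
      obtain ⟨k, hk⟩ := hdist a (φ^[m] a) a (h1.trans h2.symm)
      have hfix' : (fun z => op z a) (φ^[m] a) = φ^[m] a := hfix
      have hiter : (fun z => op z a)^[k] (φ^[m] a) = φ^[m] a :=
        Function.iterate_fixed (f := fun z => op z a) (x := φ^[m] a) hfix' k
      rw [hiter] at hk
      exact hk
    -- n ∣ m, contradiction with m < n
    have : n ∣ m := by
      have : IsPeriodicPt φ m a := huniq
      rw [← hn]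
      exact this.minimalPeriod_dvd
    have := Nat.le_of_dvd hmpos this
    omega

end QuandleLatin

/-- If every right translation of a finite quandle has cycles of pairwise distinct
lengths, then the quandle is latin. -/
theorem quandle_distinct_cycle_lengths_is_latin
    {X : Type*} [Finite X] (op : X → X → X)
    (hidem : ∀ i : X, op i i = i)
    (hrinv : ∀ i : X, Function.Bijective (fun x => op x i))
    (hdistrib : ∀ i j k : X, op (op i j) k = op (op i k) (op j k))
    (hdist : ∀ i x y : X,
      Function.minimalPeriod (fun z => op z i) x = Function.minimalPeriod (fun z => op z i) y →
      ∃ n : ℕ, (fun z => op z i)^[n] x = y) :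
    ∀ i : X, Function.Bijective (fun j => op i j) := by
  have KL := quandle_key_lemma op hidem hrinv hdistrib hdist
  -- L_i commutes with iterates of R_i
  have comm_iter : ∀ (i y : X) (n : ℕ),
      (fun z => op z i)^[n] (op i y) = op i ((fun z => op z i)^[n] y) := by
    intro i y n
    have hfixi : (fun z => op z i) i = i := hidem i
    have hiter : (fun z => op z i)^[n] i = i :=
      Function.iterate_fixed (f := fun z => op z i) (x := i) hfixi n
    rw [quandle_aut_iter op hdistrib i n i y, hiter]
  intro i
  set f : X → X := fun z => op z i with hf
  constructor
  · intro x y hxy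
    simp only at hxy
    have hmp : minimalPeriod f x = minimalPeriod f y := by
      rw [← KL i x, ← KL i y, hxy]
    obtain ⟨n, hn⟩ := hdist i x y hmp
    have h1 : f^[n] (op i x) = op i y := by
      rw [hf, comm_iter i x n]
      show op i (f^[n] x) = op i y
      rw [hn]
    rw [hxy] at h1
    have h2 : IsPeriodicPt f n (op i y) := h1
    have h3 : minimalPeriod f (op i y) ∣ n := h2.minimalPeriod_dvd
    rw [KL i y, ← hmp] at h3
    have h4 : IsPeriodicPt f n x := (isPeriodicPt_iff_minimalPeriod_dvd).2 h3
    rw [← hn, h4.eq]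
  · intro y
    obtain ⟨n, hn⟩ := hdist i (op i y) y (KL i y)
    refine ⟨f^[n] y, ?_⟩
    show op i (f^[n] y) = y
    rw [← comm_iter i y n, hn]
end
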